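/- arXiv:1602.07550 — 2 statements merged into one kernel-verified Lean document; each statement's English description precedes it below -/
import Mathlib

section
/- Let n ≥ 1 and let F : ℝⁿ → ℝⁿ be differentiable at a point x* with F(x*) = 0. Let α : ℝⁿ → ℝ be continuous at x*, and let J̃ : ℝⁿ → Matrix (Fin n) (Fin n) ℝ be continuous at x* with J̃(x*) invertible. Then the generalized Newton iteration map G(x) = x − α(x) • ((J̃ x)⁻¹ *ᵥ F x) is differentiable at x*, and its derivative (the linearization of the solver about the root) is DG(x*) = I − α(x*) · (J̃(x*))⁻¹ · DF(x*), where DF(x*) is the Jacobian matrix of F at x*. -/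
/-!
Write `G x = x - C x *ᵥ F x` with `C x = α x • (J̃ x)⁻¹`, which is continuous at `x*` because
matrix inversion is continuous at invertible matrices. No differentiability of `C` is needed:
as `F x* = 0`, `C x *ᵥ F x - C x* *ᵥ DF(x*) (x - x*)` splits into `C x` (bounded) applied to
the `o(x - x*)` remainder of `F`, plus `C x - C x*` (which tends to `0`) applied to the
`O(x - x*)` vector `DF(x*) (x - x*)`.
-/

open Matrix Asymptotics Filter Topology

theorem ContinuousAt.hasFDerivAt_clm_apply_of_eq_zero {𝕜 E F G : Type*}
    [NontriviallyNormedField 𝕜] [NormedAddCommGroup E] [NormedSpace 𝕜 E]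
    [NormedAddCommGroup F] [NormedSpace 𝕜 F] [NormedAddCommGroup G] [NormedSpace 𝕜 G]
    {u : E → F →L[𝕜] G} {f : E → F} {f' : E →L[𝕜] F} {a : E}
    (hu : ContinuousAt u a) (hf : HasFDerivAt f f' a) (h0 : f a = 0) :
    HasFDerivAt (fun x => u x (f x)) ((u a).comp f') a := by
  refine .of_isLittleO ?_
  have hsplit : ∀ x, u x (f x) - u a (f a) - (u a).comp f' (x - a)
      = u x (f x - f a - f' (x - a)) + (u x - u a) (f' (x - a)) := by
    intro x
    simp only [map_sub, _root_.sub_apply, ContinuousLinearMap.comp_apply, h0, map_zero]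
    abel
  simp only [hsplit]
  refine .add ?_ ?_
  · have hbdd : u =O[𝓝 a] (fun _ => (1 : ℝ)) := hu.tendsto.isBigO_one ℝ
    simpa using isBoundedBilinearMap_apply.isBigO_comp.trans_isLittleO
      (hbdd.norm_left.mul_isLittleO hf.isLittleO.norm_norm)
  · have hvanish : (fun x => u x - u a) =o[𝓝 a] (fun _ => (1 : ℝ)) :=
      (isLittleO_one_iff ℝ).2 (tendsto_sub_nhds_zero_iff.2 hu)
    simpa using isBoundedBilinearMap_apply.isBigO_comp.trans_isLittleO
      (hvanish.norm_left.mul_isBigO (f'.isBigO_sub _ _).norm_norm)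

theorem ContinuousAt.hasFDerivAt_mulVec_of_eq_zero {𝕜 E m n : Type*}
    [NontriviallyNormedField 𝕜] [CompleteSpace 𝕜] [NormedAddCommGroup E] [NormedSpace 𝕜 E]
    [Fintype m] [Fintype n] [DecidableEq n]
    {M : E → Matrix m n 𝕜} {f : E → n → 𝕜} {f' : E →L[𝕜] n → 𝕜} {a : E}
    (hM : ContinuousAt M a) (hf : HasFDerivAt f f' a) (h0 : f a = 0) :
    HasFDerivAt (fun x => M x *ᵥ f x) ((toLin' (M a)).toContinuousLinearMap.comp f') a := by
  have htoCLM : Continuous fun N : Matrix m n 𝕜 => (toLin' N).toContinuousLinearMap :=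
    LinearMap.continuous_of_finiteDimensional ((toLin' : Matrix m n 𝕜 ≃ₗ[𝕜] _).trans
      (LinearMap.toContinuousLinearMap : ((n → 𝕜) →ₗ[𝕜] m → 𝕜) ≃ₗ[𝕜] _)).toLinearMap
  simpa using (htoCLM.continuousAt.comp hM).hasFDerivAt_clm_apply_of_eq_zero hf h0

theorem ContinuousAt.matrix_inv {X K n : Type*} [TopologicalSpace X] [Fintype n] [DecidableEq n]
    [Field K] [TopologicalSpace K] [IsTopologicalRing K] [ContinuousInv₀ K]
    {A : X → Matrix n n K} {x : X} (hA : ContinuousAt A x) (hx : IsUnit (A x)) :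
    ContinuousAt (fun y => (A y)⁻¹) x := by
  refine (continuousAt_matrix_inv _ ?_).comp hA
  rw [Ring.inverse_eq_inv']
  exact continuousAt_inv₀ ((isUnit_iff_isUnit_det _).1 hx).ne_zero

theorem newton_map_fderiv_general (n : ℕ)
    (F : (Fin n → ℝ) → (Fin n → ℝ))
    (α : (Fin n → ℝ) → ℝ)
    (Jt : (Fin n → ℝ) → Matrix (Fin n) (Fin n) ℝ)
    (G : (Fin n → ℝ) → (Fin n → ℝ))
    (hG : ∀ x, G x = x - α x • ((Jt x)⁻¹ *ᵥ F x))
    (xstar : Fin n → ℝ)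
    (hF : DifferentiableAt ℝ F xstar) (hFz : F xstar = 0)
    (hαc : ContinuousAt α xstar)
    (hJc : ContinuousAt Jt xstar) (hJ : IsUnit (Jt xstar)) :
    DifferentiableAt ℝ G xstar ∧
      ∀ v, fderiv ℝ G xstar v = v - α xstar • ((Jt xstar)⁻¹ *ᵥ fderiv ℝ F xstar v) := by
  have hG' : G = id - fun x => (α x • (Jt x)⁻¹) *ᵥ F x := by
    funext x
    rw [hG, Pi.sub_apply, id, smul_mulVec]
  have hcoeff : ContinuousAt (fun x => α x • (Jt x)⁻¹) xstar := hαc.smul (hJc.matrix_inv hJ)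
  have hderiv := (hasFDerivAt_id xstar).sub
    (hcoeff.hasFDerivAt_mulVec_of_eq_zero hF.hasFDerivAt hFz)
  rw [hG']
  refine ⟨hderiv.differentiableAt, fun v => ?_⟩
  rw [hderiv.fderiv]
  simp

/-- The generalized Newton iteration map `G x = x - α x • ((J̃ x)⁻¹ *ᵥ F x)` is
differentiable at a root `x*` of `F` (with `α` and `J̃` continuous at `x*` and
`J̃ x*` invertible), and its derivative is `I - α(x*) (J̃ x*)⁻¹ DF(x*)`. -/
theorem newton_map_fderiv (n : ℕ) (hn : 1 ≤ n)
    (F : (Fin n → ℝ) → (Fin n → ℝ))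
    (α : (Fin n → ℝ) → ℝ)
    (Jt : (Fin n → ℝ) → Matrix (Fin n) (Fin n) ℝ)
    (G : (Fin n → ℝ) → (Fin n → ℝ))
    (hG : ∀ x, G x = x - α x • ((Jt x)⁻¹ *ᵥ F x))
    (xstar : Fin n → ℝ)
    (hF : DifferentiableAt ℝ F xstar) (hFz : F xstar = 0)
    (hαc : ContinuousAt α xstar)
    (hJc : ContinuousAt Jt xstar) (hJ : IsUnit (Jt xstar)) :
    DifferentiableAt ℝ G xstar ∧
      ∀ v, fderiv ℝ G xstar v = v - α xstar • ((Jt xstar)⁻¹ *ᵥ fderiv ℝ F xstar v) :=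
  newton_map_fderiv_general n F α Jt G hG xstar hF hFz hαc hJc hJ
end

section
/- Let n, k ≥ 1 and let F : ℝⁿ → ℝⁿ be differentiable at a point x* with F(x*) = 0 and with invertible Jacobian J = DF(x*). Let α : ℝⁿ → ℝ be continuous at x* with α(x*) = α₀, and let J̃ : ℝⁿ → Matrix (Fin n) (Fin n) ℝ be continuous at x* with J̃(x*) = J + U·C·V, where U is n×k, C is an invertible k×k matrix, V is k×n, and C⁻¹ + V J⁻¹ U is invertible. Then the generalized Newton iteration map G(x) = x − α(x) • ((J̃ x)⁻¹ *ᵥ F x) is differentiable at x* with derivative DG(x*) = (1 − α₀)·I + α₀ · J⁻¹ · U · (C⁻¹ + V J⁻¹ U)⁻¹ · V. -/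
/-!
Write `G x = x - M x *ᵥ F x` with `M x = α x • (J̃ x)⁻¹`. Since `F x* = 0`, the product rule
needs no derivative of `M`: continuity of `M` at `x*` already gives `D(M · F)(x*) = M(x*) J`.
Hence `DG(x*) = 1 - α₀ (J + U C V)⁻¹ J`, and the Woodbury identity turns `(J + U C V)⁻¹ J` into
`1 - J⁻¹ U (C⁻¹ + V J⁻¹ U)⁻¹ V`.
-/

open Matrix Asymptotics Filter Topology

theorem HasFDerivAt.clm_apply_of_continuousAt_of_eq_zero
    {𝕜 E F G : Type*} [NontriviallyNormedField 𝕜]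
    [NormedAddCommGroup E] [NormedSpace 𝕜 E] [NormedAddCommGroup F] [NormedSpace 𝕜 F]
    [NormedAddCommGroup G] [NormedSpace 𝕜 G]
    {B : E → F →L[𝕜] G} {f : E → F} {f' : E →L[𝕜] F} {a : E}
    (hB : ContinuousAt B a) (hf : HasFDerivAt f f' a) (h0 : f a = 0) :
    HasFDerivAt (fun x => B x (f x)) ((B a).comp f') a := by
  rw [hasFDerivAt_iff_isLittleO] at hf ⊢
  have hBbdd : (fun x => ‖B x‖) =O[𝓝 a] fun _ => (1 : ℝ) := hB.norm.isBigO_one ℝ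
  have hBsmall : (fun x => ‖B x - B a‖) =o[𝓝 a] fun _ => (1 : ℝ) :=
    (isLittleO_one_iff ℝ).2 ((tendsto_norm_sub_self (B a)).comp hB :)
  have hrem : (fun x => B x (f x - f a - f' (x - a))) =o[𝓝 a] fun x => (1 : ℝ) * ‖x - a‖ :=
    isBoundedBilinearMap_apply.isBigO_comp.trans_isLittleO (hBbdd.mul_isLittleO hf.norm_norm)
  have hvar : (fun x => (B x - B a) (f' (x - a))) =o[𝓝 a] fun x => (1 : ℝ) * ‖x - a‖ :=
    isBoundedBilinearMap_apply.isBigO_comp.trans_isLittleO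
      (hBsmall.mul_isBigO (f'.isBigO_sub _ a).norm_norm)
  simp only [one_mul, isLittleO_norm_right] at hrem hvar
  convert hrem.add hvar using 2 with x
  simp only [h0, map_zero, sub_zero, map_sub, _root_.sub_apply,
    ContinuousLinearMap.coe_comp, Function.comp_apply]
  abel

theorem HasFDerivAt.mulVec_of_continuousAt_of_eq_zero
    {𝕜 E m n : Type*} [NontriviallyNormedField 𝕜] [CompleteSpace 𝕜]
    [NormedAddCommGroup E] [NormedSpace 𝕜 E] [Fintype m] [Fintype n] [DecidableEq n]
    {M : E → Matrix m n 𝕜} {f : E → n → 𝕜} {f' : E →L[𝕜] n → 𝕜} {a : E}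
    (hM : ContinuousAt M a) (hf : HasFDerivAt f f' a) (h0 : f a = 0) :
    HasFDerivAt (fun x => M x *ᵥ f x)
      ((LinearMap.toContinuousLinearMap (toLin' (M a))).comp f') a := by
  let toCLM : Matrix m n 𝕜 →ₗ[𝕜] (n → 𝕜) →L[𝕜] m → 𝕜 :=
    LinearMap.toContinuousLinearMap.toLinearMap ∘ₗ toLin'.toLinearMap
  exact hf.clm_apply_of_continuousAt_of_eq_zero
    (toCLM.continuous_of_finiteDimensional.continuousAt.comp hM) h0

theorem Matrix.continuousAt_inv_of_isUnit {n K : Type*} [Fintype n] [DecidableEq n] [Field K]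
    [TopologicalSpace K] [IsTopologicalRing K] [ContinuousInv₀ K]
    {A : Matrix n n K} (hA : IsUnit A) : ContinuousAt Inv.inv A := by
  refine continuousAt_matrix_inv A ?_
  rw [Ring.inverse_eq_inv']
  exact continuousAt_inv₀ ((isUnit_iff_isUnit_det A).1 hA).ne_zero

section Woodbury

variable {m n α : Type*} [Fintype m] [DecidableEq m] [Fintype n] [DecidableEq n] [CommRing α]
  {A : Matrix n n α} {U : Matrix n m α} {C : Matrix m m α} {V : Matrix m n α}

theorem Matrix.isUnit_add_mul_mul (hA : IsUnit A) (hC : IsUnit C)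
    (hAC : IsUnit (C⁻¹ + V * A⁻¹ * U)) : IsUnit (A + U * C * V) := by
  obtain ⟨_⟩ := hA.nonempty_invertible
  obtain ⟨_⟩ := hC.nonempty_invertible
  obtain ⟨iAC⟩ := hAC.nonempty_invertible
  simp only [← invOf_eq_nonsing_inv] at iAC
  let := invertibleAddMulMul A U C V
  exact isUnit_of_invertible _

theorem Matrix.add_mul_mul_inv_mul_eq_sub (hA : IsUnit A) (hC : IsUnit C)
    (hAC : IsUnit (C⁻¹ + V * A⁻¹ * U)) :
    (A + U * C * V)⁻¹ * A = 1 - A⁻¹ * U * (C⁻¹ + V * A⁻¹ * U)⁻¹ * V := by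
  have hA' := (isUnit_iff_isUnit_det A).1 hA
  rw [add_mul_mul_inv_eq_sub A U C V hA hC hAC, sub_mul, nonsing_inv_mul A hA',
    Matrix.mul_assoc _ A⁻¹ A, nonsing_inv_mul A hA', Matrix.mul_one]

end Woodbury

theorem newton_fderiv_low_rank_error_general (n k : ℕ)
    (F : (Fin n → ℝ) → (Fin n → ℝ)) (xstar : Fin n → ℝ)
    (hF : DifferentiableAt ℝ F xstar) (hFz : F xstar = 0)
    (J : Matrix (Fin n) (Fin n) ℝ)
    (hJF : ∀ v, J *ᵥ v = fderiv ℝ F xstar v) (hJ : IsUnit J)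
    (α : (Fin n → ℝ) → ℝ) (α₀ : ℝ)
    (hαc : ContinuousAt α xstar) (hα0 : α xstar = α₀)
    (U : Matrix (Fin n) (Fin k) ℝ) (C : Matrix (Fin k) (Fin k) ℝ)
    (V : Matrix (Fin k) (Fin n) ℝ) (hC : IsUnit C)
    (hW : IsUnit (C⁻¹ + V * J⁻¹ * U))
    (Jt : (Fin n → ℝ) → Matrix (Fin n) (Fin n) ℝ)
    (hJc : ContinuousAt Jt xstar) (hJt : Jt xstar = J + U * C * V)
    (G : (Fin n → ℝ) → (Fin n → ℝ))
    (hG : ∀ x, G x = x - α x • ((Jt x)⁻¹ *ᵥ F x)) :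
    DifferentiableAt ℝ G xstar ∧
      ∀ v, fderiv ℝ G xstar v =
        ((1 - α₀) • (1 : Matrix (Fin n) (Fin n) ℝ) +
          α₀ • (J⁻¹ * U * (C⁻¹ + V * J⁻¹ * U)⁻¹ * V)) *ᵥ v := by
  have hM : ContinuousAt (fun x => α x • (Jt x)⁻¹) xstar := by
    refine hαc.smul ((continuousAt_inv_of_isUnit ?_).comp hJc)
    rw [hJt]
    exact isUnit_add_mul_mul hJ hC hW
  have hGeq : G = fun x => x - (α x • (Jt x)⁻¹) *ᵥ F x := by
    funext x
    rw [hG, smul_mulVec]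
  obtain ⟨J', hJ'⟩ := hF
  have hGd : HasFDerivAt G (ContinuousLinearMap.id ℝ _ -
      (LinearMap.toContinuousLinearMap (toLin' (α₀ • (J + U * C * V)⁻¹))).comp J') xstar := by
    rw [hGeq, ← hα0, ← hJt]
    exact (hasFDerivAt_id xstar).sub (hJ'.mulVec_of_continuousAt_of_eq_zero hM hFz)
  refine ⟨hGd.differentiableAt, fun v => ?_⟩
  have hJ'v : J' v = J *ᵥ v := by rw [hJF, hJ'.fderiv]
  simp only [hGd.fderiv, _root_.sub_apply, ContinuousLinearMap.coe_comp, Function.comp_apply,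
    ContinuousLinearMap.id_apply, LinearMap.coe_toContinuousLinearMap', toLin'_apply, hJ'v,
    mulVec_mulVec, smul_mul_assoc]
  rw [add_mul_mul_inv_mul_eq_sub hJ hC hW, smul_mulVec, add_mulVec, smul_mulVec, smul_mulVec,
    sub_mulVec, one_mulVec]
  module

/-- Linearization of the damped Newton solver about a root in the presence of a
low-rank Jacobian implementation error `J̃(x*) = J + U C V`:
`DG(x*) = (1 - α₀) I + α₀ J⁻¹ U (C⁻¹ + V J⁻¹ U)⁻¹ V`. -/
theorem newton_fderiv_low_rank_error (n k : ℕ) (hn : 1 ≤ n) (hk : 1 ≤ k)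
    (F : (Fin n → ℝ) → (Fin n → ℝ)) (xstar : Fin n → ℝ)
    (hF : DifferentiableAt ℝ F xstar) (hFz : F xstar = 0)
    (J : Matrix (Fin n) (Fin n) ℝ)
    (hJF : ∀ v, J *ᵥ v = fderiv ℝ F xstar v) (hJ : IsUnit J)
    (α : (Fin n → ℝ) → ℝ) (α₀ : ℝ)
    (hαc : ContinuousAt α xstar) (hα0 : α xstar = α₀)
    (U : Matrix (Fin n) (Fin k) ℝ) (C : Matrix (Fin k) (Fin k) ℝ)
    (V : Matrix (Fin k) (Fin n) ℝ) (hC : IsUnit C)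
    (hW : IsUnit (C⁻¹ + V * J⁻¹ * U))
    (Jt : (Fin n → ℝ) → Matrix (Fin n) (Fin n) ℝ)
    (hJc : ContinuousAt Jt xstar) (hJt : Jt xstar = J + U * C * V)
    (G : (Fin n → ℝ) → (Fin n → ℝ))
    (hG : ∀ x, G x = x - α x • ((Jt x)⁻¹ *ᵥ F x)) :
    DifferentiableAt ℝ G xstar ∧
      ∀ v, fderiv ℝ G xstar v =
        ((1 - α₀) • (1 : Matrix (Fin n) (Fin n) ℝ) +
          α₀ • (J⁻¹ * U * (C⁻¹ + V * J⁻¹ * U)⁻¹ * V)) *ᵥ v :=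
  newton_fderiv_low_rank_error_general n k F xstar hF hFz J hJF hJ α α₀ hαc hα0 U C V hC hW Jt hJc
    hJt G hG
end
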